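/- Let ℓ ≥ 4, n = ℓ + 2, and k = ℓ. Let Y ∈ ℝ^{(ℓ+2)×ℓ} have rows e₁, …, e_ℓ (the standard basis vectors of ℝ^ℓ), the zero vector 0, and (2/ℓ)·𝟙_ℓ; and let Z ∈ ℝ^{(ℓ+2)×ℓ} have rows e₁, …, e_ℓ, 0, 0. Then, for the complete-graph SNL cost g with ground truth Y: Z is second-order critical and g(Z) > 0 (so Z is a spurious second-order critical point). If moreover ℓ ≥ 5, then every Ż ∈ ℝ^{(ℓ+2)×ℓ} with ⟨ŻŻᵀ, (Δ*∘Δ)(ZZᵀ − YYᵀ)⟩ + (1/2)·‖Δ(ŻZᵀ + ZŻᵀ)‖_F² = 0 has the form Ż = 𝟙vᵀ + ZΩ for some v ∈ ℝ^ℓ and some skew-symmetric Ω ∈ ℝ^{ℓ×ℓ} (i.e., Z is a strict spurious second-order critical point). -/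

import Mathlib

/-!
In `Y` the origin and the point `(2/ℓ)·𝟙` are mirror images in the hyperplane through
`e₁, …, e_ℓ`, so both lie at distance 1 from every `eᵢ`; `Z` merges them. The two configurations
therefore have the same squared distances except for that one pair `p, m`:
`Δ(ZZᵀ − YYᵀ) = −(2/ℓ)(E_pm + E_mp)` and `(Δ*∘Δ)(ZZᵀ − YYᵀ) = −(2/ℓ) uuᵀ` with `u = e_p − e_m`,
which annihilates `Z` since its rows `p` and `m` agree. For `W` the second-order form is half a sum
of squares plus `∑ₖ (a_k² + b_k² − (2/ℓ)(a_k − b_k)²)`, where `a_k, b_k` compare `W_{kk}` with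
the `k`-th entries of rows `p, m` of `W`. Since
`a² + b² − c(a − b)² = (a + b)²/2 + (1/2 − c)(a − b)²`, this is nonnegative for `ℓ ≥ 4`, and for
`ℓ ≥ 5` it vanishes only on the directions `𝟙vᵀ + ZΩ`.
-/

open Matrix

namespace SNL

noncomputable def delta {n : ℕ} (X : Matrix (Fin n) (Fin n) ℝ) : Matrix (Fin n) (Fin n) ℝ :=
  Matrix.of fun i j => (X i i + X j j - 2 * X i j) / 2

noncomputable def deltaStar {n : ℕ} (H : Matrix (Fin n) (Fin n) ℝ) : Matrix (Fin n) (Fin n) ℝ :=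
  Matrix.diagonal (fun i => ∑ k, H i k) - H

def frobInner {n m : ℕ} (X Y : Matrix (Fin n) (Fin m) ℝ) : ℝ := ∑ i, ∑ j, X i j * Y i j

def frobNormSq {n m : ℕ} (X : Matrix (Fin n) (Fin m) ℝ) : ℝ := frobInner X X

noncomputable def snlCost {n ℓ k : ℕ} (Y : Matrix (Fin n) (Fin ℓ) ℝ)
    (Z : Matrix (Fin n) (Fin k) ℝ) : ℝ :=
  frobNormSq (delta (Z * Zᵀ - Y * Yᵀ))

def IsFirstOrderCritical {n ℓ k : ℕ} (Y : Matrix (Fin n) (Fin ℓ) ℝ)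
    (Z : Matrix (Fin n) (Fin k) ℝ) : Prop :=
  deltaStar (delta (Z * Zᵀ - Y * Yᵀ)) * Z = 0

def IsSecondOrderCritical {n ℓ k : ℕ} (Y : Matrix (Fin n) (Fin ℓ) ℝ)
    (Z : Matrix (Fin n) (Fin k) ℝ) : Prop :=
  IsFirstOrderCritical Y Z ∧
    ∀ W : Matrix (Fin n) (Fin k) ℝ,
      0 ≤ frobInner (W * Wᵀ) (deltaStar (delta (Z * Zᵀ - Y * Yᵀ)))
          + (1 / 2) * frobNormSq (delta (W * Zᵀ + Z * Wᵀ))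

noncomputable def centering (n : ℕ) : Matrix (Fin n) (Fin n) ℝ :=
  1 - ((n : ℝ)⁻¹) • Matrix.of (fun _ _ => (1 : ℝ))

def diagM {n : ℕ} (X : Matrix (Fin n) (Fin n) ℝ) : Matrix (Fin n) (Fin n) ℝ :=
  Matrix.diagonal (fun i => X i i)

noncomputable def Gamma {n : ℕ} (X : Matrix (Fin n) (Fin n) ℝ) : Matrix (Fin n) (Fin n) ℝ :=
  centering n * diagM X * centering n

noncomputable def Psi {n : ℕ} (X : Matrix (Fin n) (Fin n) ℝ) : Matrix (Fin n) (Fin n) ℝ :=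
  ((n : ℝ) / 2) • (centering n * diagM X * centering n) +
    ((1 / 2) * Matrix.trace X) • centering n

noncomputable def lambdaMax {n : ℕ} (X : Matrix (Fin n) (Fin n) ℝ) : ℝ :=
  sSup {r : ℝ | ∃ v : Fin n → ℝ, (∑ i, v i ^ 2) = 1 ∧ r = v ⬝ᵥ (X *ᵥ v)}

end SNL

namespace SNL

noncomputable def secondOrderForm {n ℓ k : ℕ} (Y : Matrix (Fin n) (Fin ℓ) ℝ)
    (Z W : Matrix (Fin n) (Fin k) ℝ) : ℝ :=
  frobInner (W * Wᵀ) (deltaStar (delta (Z * Zᵀ - Y * Yᵀ)))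
    + (1 / 2) * frobNormSq (delta (W * Zᵀ + Z * Wᵀ))

section General

variable {n k : ℕ}

lemma delta_sub (A B : Matrix (Fin n) (Fin n) ℝ) : delta (A - B) = delta A - delta B := by
  ext a b
  simp only [delta, of_apply, Matrix.sub_apply]
  ring

lemma delta_mul_transpose_self_apply (Z : Matrix (Fin n) (Fin k) ℝ) (a b : Fin n) :
    delta (Z * Zᵀ) a b = (∑ i, (Z a i - Z b i) ^ 2) / 2 := by
  simp only [delta, of_apply, mul_apply, transpose_apply, sub_sq, Finset.sum_add_distrib,
    Finset.sum_sub_distrib, ← Finset.mul_sum, mul_assoc, ← pow_two]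
  ring

lemma delta_mul_transpose_add_apply (W Z : Matrix (Fin n) (Fin k) ℝ) (a b : Fin n) :
    delta (W * Zᵀ + Z * Wᵀ) a b = ∑ i, (W a i - W b i) * (Z a i - Z b i) := by
  simp only [delta, of_apply, Matrix.add_apply, mul_apply, transpose_apply, sub_mul, mul_sub,
    Finset.sum_sub_distrib]
  simp only [mul_comm (Z _ _)]
  ring

lemma deltaStar_smul_single_add_single {p m : Fin n} (hpm : p ≠ m) (c : ℝ) :
    deltaStar (c • (single p m 1 + single m p 1)) =
      c • vecMulVec (Pi.single p 1 - Pi.single m 1) (Pi.single p 1 - Pi.single m 1) := by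
  ext a b
  simp only [deltaStar, Matrix.sub_apply, diagonal_apply, Matrix.smul_apply, Matrix.add_apply,
    single_apply, vecMulVec_apply, Pi.sub_apply, Pi.single_apply, smul_eq_mul, mul_add,
    Finset.sum_add_distrib, mul_ite, mul_one, mul_zero]
  by_cases hap : a = p <;> by_cases ham : a = m <;> by_cases hbp : b = p <;>
    by_cases hbm : b = m <;> subst_vars <;> simp_all [eq_comm]

lemma frobNormSq_smul_single_add_single {p m : Fin n} (hpm : p ≠ m) (c : ℝ) :
    frobNormSq (c • (single p m 1 + single m p 1)) = 2 * c ^ 2 := by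
  simp [frobNormSq, frobInner, single_apply, ite_and, Finset.sum_add_distrib, mul_add, add_mul,
    hpm, hpm.symm]
  ring

lemma frobInner_mul_transpose_smul_vecMulVec (W : Matrix (Fin n) (Fin k) ℝ) (c : ℝ)
    (u : Fin n → ℝ) :
    frobInner (W * Wᵀ) (c • vecMulVec u u) = c * ∑ i, (u ᵥ* W) i ^ 2 := by
  simp only [frobInner, mul_apply, transpose_apply, Matrix.smul_apply, vecMulVec_apply, vecMul,
    dotProduct, smul_eq_mul, sq, Finset.sum_mul, Finset.mul_sum]
  conv_lhs => rw [Finset.sum_comm]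
  conv_rhs => rw [Finset.sum_comm]
  refine Finset.sum_congr rfl fun b _ => ?_
  rw [Finset.sum_comm]
  exact Finset.sum_congr rfl fun a _ => Finset.sum_congr rfl fun i _ => by ring

lemma single_sub_single_vecMul {m : ℕ} (p q : Fin n) (W : Matrix (Fin n) (Fin m) ℝ) :
    (Pi.single p 1 - Pi.single q 1) ᵥ* W = W p - W q := by
  rw [sub_vecMul, single_one_vecMul, single_one_vecMul]
  rfl

end General

lemma sq_sub_add_sq_sub_sub_mul_sq (c x y z : ℝ) :
    (x - y) ^ 2 + (x - z) ^ 2 - c * (y - z) ^ 2 =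
      (2 * x - y - z) ^ 2 / 2 + (1 / 2 - c) * (y - z) ^ 2 := by
  ring

lemma sq_sub_add_sq_sub_sub_mul_sq_nonneg {c : ℝ} (hc : c ≤ 1 / 2) (x y z : ℝ) :
    0 ≤ (x - y) ^ 2 + (x - z) ^ 2 - c * (y - z) ^ 2 := by
  rw [sq_sub_add_sq_sub_sub_mul_sq]
  exact add_nonneg (by positivity) (mul_nonneg (sub_nonneg.2 hc) (sq_nonneg _))

lemma eq_and_eq_of_sq_sub_add_sq_sub_sub_mul_sq_eq_zero {c : ℝ} (hc : c < 1 / 2) {x y z : ℝ}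
    (h : (x - y) ^ 2 + (x - z) ^ 2 - c * (y - z) ^ 2 = 0) : y = x ∧ z = x := by
  rw [sq_sub_add_sq_sub_sub_mul_sq] at h
  obtain ⟨hxyz, hyz⟩ := (add_eq_zero_iff_of_nonneg (by positivity)
    (mul_nonneg (sub_nonneg.2 hc.le) (sq_nonneg _))).1 h
  have hxyz : 2 * x - y - z = 0 := by simpa using hxyz
  have hyz : y - z = 0 :=
    pow_eq_zero_iff two_ne_zero |>.1 ((mul_eq_zero.1 hyz).resolve_left (sub_pos.2 hc).ne')
  constructor <;> linarith

namespace SpuriousExample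

variable {ℓ : ℕ}

def base (i : Fin ℓ) : Fin (ℓ + 2) := i.castSucc.castSucc

def origin (ℓ : ℕ) : Fin (ℓ + 2) := (Fin.last ℓ).castSucc

def mirror (ℓ : ℕ) : Fin (ℓ + 2) := Fin.last (ℓ + 1)

@[simp] lemma base_ne_origin (i : Fin ℓ) : base i ≠ origin ℓ := by
  simp [base, origin, Fin.ext_iff, i.isLt.ne]

@[simp] lemma base_ne_mirror (i : Fin ℓ) : base i ≠ mirror ℓ := by
  simp [base, mirror, Fin.ext_iff]
  omega

@[simp] lemma origin_ne_mirror : origin ℓ ≠ mirror ℓ := by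
  simp [origin, mirror, Fin.ext_iff]

@[simp] lemma origin_ne_base (i : Fin ℓ) : origin ℓ ≠ base i := (base_ne_origin i).symm

@[simp] lemma mirror_ne_base (i : Fin ℓ) : mirror ℓ ≠ base i := (base_ne_mirror i).symm

@[simp] lemma mirror_ne_origin : mirror ℓ ≠ origin ℓ := origin_ne_mirror.symm

@[elab_as_elim]
lemma induction_on {motive : Fin (ℓ + 2) → Prop} (a : Fin (ℓ + 2))
    (base : ∀ i, motive (base i)) (origin : motive (origin ℓ)) (mirror : motive (mirror ℓ)) :
    motive a :=
  Fin.lastCases mirror (Fin.lastCases origin base) a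

lemma sum_univ_eq_sum_base_add {M : Type*} [AddCommMonoid M] (f : Fin (ℓ + 2) → M) :
    ∑ a, f a = ∑ i, f (base i) + f (origin ℓ) + f (mirror ℓ) := by
  rw [Fin.sum_univ_castSucc, Fin.sum_univ_castSucc]
  rfl

noncomputable def Y₀ (ℓ : ℕ) : Matrix (Fin (ℓ + 2)) (Fin ℓ) ℝ :=
  Matrix.of fun (i : Fin (ℓ + 2)) (j : Fin ℓ) =>
    if (i : ℕ) < ℓ then (if (j : ℕ) = (i : ℕ) then (1 : ℝ) else 0)
    else if (i : ℕ) = ℓ then 0 else 2 / (ℓ : ℝ)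

noncomputable def Z₀ (ℓ : ℕ) : Matrix (Fin (ℓ + 2)) (Fin ℓ) ℝ :=
  Matrix.of fun (i : Fin (ℓ + 2)) (j : Fin ℓ) =>
    if (i : ℕ) < ℓ then (if (j : ℕ) = (i : ℕ) then (1 : ℝ) else 0) else 0

lemma Y₀_base (i : Fin ℓ) : Y₀ ℓ (base i) = Pi.single i 1 := by
  ext j
  simp [Y₀, base, Pi.single_apply, Fin.ext_iff]

lemma Y₀_origin : Y₀ ℓ (origin ℓ) = 0 := by
  ext j
  simp [Y₀, origin]

lemma Y₀_mirror : Y₀ ℓ (mirror ℓ) = fun _ => (2 / ℓ : ℝ) := by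
  ext j
  simp [Y₀, mirror]

lemma Z₀_base (i : Fin ℓ) : Z₀ ℓ (base i) = Pi.single i 1 := by
  ext j
  simp [Z₀, base, Pi.single_apply, Fin.ext_iff]

lemma Z₀_origin : Z₀ ℓ (origin ℓ) = 0 := by
  ext j
  simp [Z₀, origin]

lemma Z₀_mirror : Z₀ ℓ (mirror ℓ) = 0 := by
  ext j
  simp [Z₀, mirror]

lemma delta_gram_sub (hℓ : ℓ ≠ 0) :
    delta (Z₀ ℓ * (Z₀ ℓ)ᵀ - Y₀ ℓ * (Y₀ ℓ)ᵀ) =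
      (-2 / ℓ : ℝ) • (single (origin ℓ) (mirror ℓ) 1 + single (mirror ℓ) (origin ℓ) 1) := by
  ext a b
  rw [delta_sub, Matrix.sub_apply, delta_mul_transpose_self_apply, delta_mul_transpose_self_apply]
  induction a using induction_on <;> induction b using induction_on <;>
    simp [Y₀_base, Y₀_origin, Y₀_mirror, Z₀_base, Z₀_origin, Z₀_mirror, Pi.single_apply,
      sub_sq, Finset.sum_add_distrib, Finset.sum_sub_distrib] <;>
    field_simp <;> ring

lemma deltaStar_delta_gram_sub (hℓ : ℓ ≠ 0) :
    deltaStar (delta (Z₀ ℓ * (Z₀ ℓ)ᵀ - Y₀ ℓ * (Y₀ ℓ)ᵀ)) =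
      (-2 / ℓ : ℝ) • vecMulVec (Pi.single (origin ℓ) 1 - Pi.single (mirror ℓ) 1)
        (Pi.single (origin ℓ) 1 - Pi.single (mirror ℓ) 1) := by
  rw [delta_gram_sub hℓ, deltaStar_smul_single_add_single origin_ne_mirror]

lemma isFirstOrderCritical (hℓ : ℓ ≠ 0) : IsFirstOrderCritical (Y₀ ℓ) (Z₀ ℓ) := by
  rw [IsFirstOrderCritical, deltaStar_delta_gram_sub hℓ, smul_mul, vecMulVec_mul,
    single_sub_single_vecMul, Z₀_origin, Z₀_mirror, sub_zero]
  ext a j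
  simp [vecMulVec_apply]

lemma snlCost_pos (hℓ : ℓ ≠ 0) : 0 < snlCost (Y₀ ℓ) (Z₀ ℓ) := by
  rw [snlCost, delta_gram_sub hℓ, frobNormSq_smul_single_add_single origin_ne_mirror]
  have : (0 : ℝ) < ℓ := by positivity
  positivity

lemma frobInner_deltaStar_delta_gram_sub (hℓ : ℓ ≠ 0) (W : Matrix (Fin (ℓ + 2)) (Fin ℓ) ℝ) :
    frobInner (W * Wᵀ) (deltaStar (delta (Z₀ ℓ * (Z₀ ℓ)ᵀ - Y₀ ℓ * (Y₀ ℓ)ᵀ))) =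
      -2 / ℓ * ∑ k, (W (origin ℓ) k - W (mirror ℓ) k) ^ 2 := by
  rw [deltaStar_delta_gram_sub hℓ, frobInner_mul_transpose_smul_vecMulVec,
    single_sub_single_vecMul]
  rfl

lemma frobNormSq_delta_mul_Z₀_transpose_add (W : Matrix (Fin (ℓ + 2)) (Fin ℓ) ℝ) :
    frobNormSq (delta (W * (Z₀ ℓ)ᵀ + Z₀ ℓ * Wᵀ)) =
      ∑ i, ∑ j, (W (base i) i - W (base j) i - (W (base i) j - W (base j) j)) ^ 2 +
        2 * ∑ k, (W (base k) k - W (origin ℓ) k) ^ 2 +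
        2 * ∑ k, (W (base k) k - W (mirror ℓ) k) ^ 2 := by
  simp only [frobNormSq, frobInner, sum_univ_eq_sum_base_add, delta_mul_transpose_add_apply,
    Z₀_base, Z₀_origin, Z₀_mirror]
  simp only [Pi.zero_apply, sub_zero, zero_sub, mul_neg, mul_sub, Finset.sum_neg_distrib,
    Finset.sum_sub_distrib, Pi.single_apply, mul_ite, mul_one, mul_zero, Finset.sum_ite_eq',
    Finset.mem_univ, if_true, Finset.sum_const_zero, add_zero, neg_sq, sub_self,
    zero_pow two_ne_zero, ← pow_two, Finset.sum_add_distrib, sub_sq_comm (W (origin ℓ) _),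
    sub_sq_comm (W (mirror ℓ) _)]
  ring

lemma secondOrderForm_eq (hℓ : ℓ ≠ 0) (W : Matrix (Fin (ℓ + 2)) (Fin ℓ) ℝ) :
    secondOrderForm (Y₀ ℓ) (Z₀ ℓ) W =
      1 / 2 * ∑ i, ∑ j, (W (base i) i - W (base j) i - (W (base i) j - W (base j) j)) ^ 2 +
        ∑ k, ((W (base k) k - W (origin ℓ) k) ^ 2 + (W (base k) k - W (mirror ℓ) k) ^ 2 -
          2 / ℓ * (W (origin ℓ) k - W (mirror ℓ) k) ^ 2) := by
  rw [secondOrderForm, frobInner_deltaStar_delta_gram_sub hℓ,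
    frobNormSq_delta_mul_Z₀_transpose_add]
  simp only [Finset.sum_add_distrib, Finset.sum_sub_distrib, ← Finset.mul_sum]
  ring

lemma secondOrderForm_nonneg (hℓ : 4 ≤ ℓ) (W : Matrix (Fin (ℓ + 2)) (Fin ℓ) ℝ) :
    0 ≤ secondOrderForm (Y₀ ℓ) (Z₀ ℓ) W := by
  have hc : (2 / ℓ : ℝ) ≤ 1 / 2 := by
    rw [div_le_div_iff₀ (by positivity) two_pos]
    exact_mod_cast (by omega : 2 * 2 ≤ 1 * ℓ)
  rw [secondOrderForm_eq (by omega)]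
  exact add_nonneg (by positivity)
    (Finset.sum_nonneg fun k _ => sq_sub_add_sq_sub_sub_mul_sq_nonneg hc _ _ _)

lemma eq_of_secondOrderForm_eq_zero (hℓ : 5 ≤ ℓ) {W : Matrix (Fin (ℓ + 2)) (Fin ℓ) ℝ}
    (hW : secondOrderForm (Y₀ ℓ) (Z₀ ℓ) W = 0) :
    (∀ i j, W (base i) i - W (base j) i = W (base i) j - W (base j) j) ∧
      ∀ k, W (origin ℓ) k = W (base k) k ∧ W (mirror ℓ) k = W (base k) k := by
  have hc : (2 / ℓ : ℝ) < 1 / 2 := by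
    rw [div_lt_div_iff₀ (by positivity) two_pos]
    exact_mod_cast (by omega : 2 * 2 < 1 * ℓ)
  rw [secondOrderForm_eq (by omega)] at hW
  obtain ⟨hdiag, hrows⟩ := (add_eq_zero_iff_of_nonneg (by positivity)
    (Finset.sum_nonneg fun k _ => sq_sub_add_sq_sub_sub_mul_sq_nonneg hc.le _ _ _)).1 hW
  refine ⟨fun i j => ?_, fun k => ?_⟩
  · have hdiag :
        ∑ i, ∑ j, (W (base i) i - W (base j) i - (W (base i) j - W (base j) j)) ^ 2 = 0 := by
      simpa using hdiag
    have hi := (Finset.sum_eq_zero_iff_of_nonneg fun i _ => Finset.sum_nonneg fun j _ =>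
      sq_nonneg _).1 hdiag i (Finset.mem_univ i)
    have hij :=
      (Finset.sum_eq_zero_iff_of_nonneg fun j _ => sq_nonneg _).1 hi j (Finset.mem_univ j)
    exact sub_eq_zero.1 (pow_eq_zero_iff two_ne_zero |>.1 hij)
  · exact eq_and_eq_of_sq_sub_add_sq_sub_sub_mul_sq_eq_zero hc
      ((Finset.sum_eq_zero_iff_of_nonneg fun k _ =>
        sq_sub_add_sq_sub_sub_mul_sq_nonneg hc.le _ _ _).1 hrows k (Finset.mem_univ k))

lemma exists_eq_vecMulVec_add_Z₀_mul {W : Matrix (Fin (ℓ + 2)) (Fin ℓ) ℝ}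
    (hbase : ∀ i j, W (base i) i - W (base j) i = W (base i) j - W (base j) j)
    (hrows : ∀ k, W (origin ℓ) k = W (base k) k ∧ W (mirror ℓ) k = W (base k) k) :
    ∃ (v : Fin ℓ → ℝ) (Ω : Matrix (Fin ℓ) (Fin ℓ) ℝ),
      Ωᵀ = -Ω ∧ W = vecMulVec (fun _ => (1 : ℝ)) v + Z₀ ℓ * Ω := by
  refine ⟨W (origin ℓ), of fun i j => W (base i) j - W (origin ℓ) j, ?_, ?_⟩
  · ext i j
    simp only [transpose_apply, Matrix.neg_apply, of_apply]
    linarith [hbase i j, (hrows i).1, (hrows j).1]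
  · ext a j
    induction a using induction_on <;>
      simp [mul_apply, Z₀_base, Z₀_origin, Z₀_mirror, Pi.single_apply, vecMulVec_apply,
        (hrows j).1, (hrows j).2]

end SpuriousExample

end SNL

open SNL Matrix

theorem statement_15 {ℓ : ℕ} (hℓ : 4 ≤ ℓ)
    -- Y has rows e₁, …, e_ℓ, 0, (2/ℓ)·𝟙_ℓ
    (Y : Matrix (Fin (ℓ + 2)) (Fin ℓ) ℝ)
    (hY : Y = Matrix.of fun (i : Fin (ℓ + 2)) (j : Fin ℓ) =>
      if (i : ℕ) < ℓ then (if (j : ℕ) = (i : ℕ) then (1 : ℝ) else 0)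
      else if (i : ℕ) = ℓ then 0 else 2 / (ℓ : ℝ))
    -- Z has rows e₁, …, e_ℓ, 0, 0
    (Z : Matrix (Fin (ℓ + 2)) (Fin ℓ) ℝ)
    (hZ : Z = Matrix.of fun (i : Fin (ℓ + 2)) (j : Fin ℓ) =>
      if (i : ℕ) < ℓ then (if (j : ℕ) = (i : ℕ) then (1 : ℝ) else 0) else 0) :
    (IsSecondOrderCritical Y Z ∧ 0 < snlCost Y Z) ∧
    (5 ≤ ℓ →
      ∀ W : Matrix (Fin (ℓ + 2)) (Fin ℓ) ℝ,
        frobInner (W * Wᵀ) (deltaStar (delta (Z * Zᵀ - Y * Yᵀ)))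
          + (1 / 2) * frobNormSq (delta (W * Zᵀ + Z * Wᵀ)) = 0 →
        ∃ (v : Fin ℓ → ℝ) (Ω : Matrix (Fin ℓ) (Fin ℓ) ℝ),
          Ωᵀ = -Ω ∧ W = vecMulVec (fun _ => (1 : ℝ)) v + Z * Ω) := by
  obtain rfl : Y = SpuriousExample.Y₀ ℓ := hY
  obtain rfl : Z = SpuriousExample.Z₀ ℓ := hZ
  refine ⟨⟨⟨SpuriousExample.isFirstOrderCritical (by omega),
    SpuriousExample.secondOrderForm_nonneg hℓ⟩, SpuriousExample.snlCost_pos (by omega)⟩,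
    fun hℓ5 W hW => ?_⟩
  obtain ⟨hbase, hrows⟩ := SpuriousExample.eq_of_secondOrderForm_eq_zero hℓ5 hW
  exact SpuriousExample.exists_eq_vecMulVec_add_Z₀_mul hbase hrows
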